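/- arXiv:0803.1749 — 2 statements merged into one kernel-verified Lean document; each statement's English description precedes it below -/
import Mathlib

section
/- (Isometry identity.) Let {A_n} and {B_n} be μ-Cauchy sequences in Ω, and let S, T ⊆ X satisfy lim_{n→∞} μ*(A_n △ S) = 0 and lim_{n→∞} μ*(B_n △ T) = 0. Then the limit lim_{n→∞} μ(A_n △ B_n) exists and equals μ*(S △ T). -/
open Filter Set Topology
open scoped symmDiff ENNReal

/-- `Ω` is an algebra of sets on `X`: it contains `∅` and is closed under
complements and finite unions. -/
def IsSetAlgebraOn {X : Type*} (Ω : Set (Set X)) : Prop :=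
  ∅ ∈ Ω ∧ (∀ A ∈ Ω, Aᶜ ∈ Ω) ∧ (∀ A ∈ Ω, ∀ B ∈ Ω, A ∪ B ∈ Ω)

/-- `μ` is a countably additive measure on the algebra `Ω`. -/
def IsCountablyAdditiveOn {X : Type*} (Ω : Set (Set X)) (μ : Set X → ℝ≥0∞) : Prop :=
  μ ∅ = 0 ∧ ∀ A : ℕ → Set X, (∀ i, A i ∈ Ω) → Pairwise (Function.onFun Disjoint A) →
    (⋃ i, A i) ∈ Ω → μ (⋃ i, A i) = ∑' i, μ (A i)

/-- The outer measure induced by `μ`: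
`μ*(A) = inf { ∑ μ(Cᵢ) : A ⊆ ⋃ᵢ Cᵢ, Cᵢ ∈ Ω }`. -/
noncomputable def muStar {X : Type*} (Ω : Set (Set X)) (μ : Set X → ℝ≥0∞)
    (A : Set X) : ℝ≥0∞ :=
  ⨅ (C : ℕ → Set X) (_ : ∀ i, C i ∈ Ω) (_ : A ⊆ ⋃ i, C i), ∑' i, μ (C i)

/-- A `μ`-Cauchy sequence in `Ω`: a sequence of members of `Ω` with
`μ(B n ∆ B m) → 0` as `n, m → ∞`. -/
def MuCauchy {X : Type*} (Ω : Set (Set X)) (μ : Set X → ℝ≥0∞) (B : ℕ → Set X) : Prop :=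
  (∀ n, B n ∈ Ω) ∧ Tendsto (fun p : ℕ × ℕ => μ (B p.1 ∆ B p.2)) atTop (𝓝 0)

/-- `S̃`: the collection of subsets of `X` that are limits (in the pseudometric
`d(A,B) = μ*(A ∆ B)`) of `μ`-Cauchy sequences from `Ω`. -/
def Stilde {X : Type*} (Ω : Set (Set X)) (μ : Set X → ℝ≥0∞) : Set (Set X) :=
  {S | ∃ B : ℕ → Set X, MuCauchy Ω μ B ∧
    Tendsto (fun n => muStar Ω μ (B n ∆ S)) atTop (𝓝 0)}

/-! The induced `μ*` is an outer measure (Mathlib's `inducedOuterMeasure`), and it agrees with `μ`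
on `Ω` because a countably additive content on a ring of sets is σ-subadditive. For any outer
measure `m`, the inclusions `A ∆ B ⊆ (S ∆ T) ∪ (A ∆ S) ∪ (B ∆ T)` and
`S ∆ T ⊆ (A ∆ B) ∪ (A ∆ S) ∪ (B ∆ T)` give
`|m (Aₙ ∆ Bₙ) - m (S ∆ T)| ≤ m (Aₙ ∆ S) + m (Bₙ ∆ T) → 0`. -/

open MeasureTheory

section

variable {X : Type*} {Ω : Set (Set X)} {μ : Set X → ℝ≥0∞}

theorem IsSetAlgebraOn.isSetRing (hΩ : IsSetAlgebraOn Ω) : IsSetRing Ω := by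
  obtain ⟨h_empty, h_compl, h_union⟩ := hΩ
  refine ⟨h_empty, fun s t hs ht => h_union s hs t ht, fun s t hs ht => ?_⟩
  have h := h_compl _ (h_union _ (h_compl s hs) t ht)
  rwa [compl_union, compl_compl, ← sdiff_eq] at h

theorem IsSetAlgebraOn.symmDiff_mem (hΩ : IsSetAlgebraOn Ω) {s t : Set X} (hs : s ∈ Ω)
    (ht : t ∈ Ω) : s ∆ t ∈ Ω :=
  hΩ.isSetRing.union_mem (hΩ.isSetRing.sdiff_mem hs ht) (hΩ.isSetRing.sdiff_mem ht hs)

theorem IsCountablyAdditiveOn.apply_union (hΩ : IsSetAlgebraOn Ω) (hμ : IsCountablyAdditiveOn Ω μ)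
    {s t : Set X} (hs : s ∈ Ω) (ht : t ∈ Ω) (hst : Disjoint s t) :
    μ (s ∪ t) = μ s + μ t := by
  set f : ℕ → Set X := fun n => if n = 0 then s else if n = 1 then t else ∅
  have hf_union : (⋃ n, f n) = s ∪ t := by
    ext x
    simp only [mem_iUnion, mem_union]
    constructor
    · rintro ⟨n, hn⟩
      rcases n with _ | _ | n <;> simp_all [f]
    · rintro (hx | hx)
      exacts [⟨0, by simpa [f]⟩, ⟨1, by simpa [f]⟩]
  have hf_mem : ∀ n, f n ∈ Ω := fun n => by
    rcases n with _ | _ | n <;> simp [f, hs, ht, hΩ.1]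
  have hf_disj : Pairwise (Function.onFun Disjoint f) := fun i j hij => by
    rcases i with _ | _ | i <;> rcases j with _ | _ | j <;> simp_all [f, Function.onFun, hst.symm]
  have h := hμ.2 f hf_mem hf_disj (hf_union ▸ hΩ.2.2 s hs t ht)
  rw [hf_union, tsum_eq_sum (s := Finset.range 2) fun n hn => ?_] at h
  · simpa [Finset.sum_range_succ, f] using h
  · rcases n with _ | _ | n <;> simp_all [f, hμ.1]

noncomputable def IsCountablyAdditiveOn.toAddContent (hΩ : IsSetAlgebraOn Ω)
    (hμ : IsCountablyAdditiveOn Ω μ) : AddContent ℝ≥0∞ Ω :=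
  hΩ.isSetRing.addContent_of_union μ hμ.1 (hμ.apply_union hΩ)

theorem IsCountablyAdditiveOn.isSigmaSubadditive (hΩ : IsSetAlgebraOn Ω)
    (hμ : IsCountablyAdditiveOn Ω μ) : (hμ.toAddContent hΩ).IsSigmaSubadditive :=
  isSigmaSubadditive_of_addContent_iUnion_eq_tsum hΩ.isSetRing
    fun f hf hU hd => hμ.2 f hf hd hU

theorem muStar_eq_inducedOuterMeasure (h_empty : ∅ ∈ Ω) (hμ_empty : μ ∅ = 0) :
    muStar Ω μ = inducedOuterMeasure (fun s _ => μ s) h_empty hμ_empty := by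
  ext A
  rw [inducedOuterMeasure, OuterMeasure.ofFunction_eq_iInf_mem _ _ fun s hs => extend_eq_top _ hs]
  refine iInf_congr fun C => iInf_congr fun hC => iInf_congr fun _ => ?_
  exact tsum_congr fun i => (extend_eq (fun s (_ : s ∈ Ω) => μ s) (hC i)).symm

theorem muStar_eq_of_mem (hΩ : IsSetAlgebraOn Ω) (hμ : IsCountablyAdditiveOn Ω μ)
    {A : Set X} (hA : A ∈ Ω) : muStar Ω μ A = μ A := by
  rw [muStar_eq_inducedOuterMeasure hΩ.1 hμ.1]
  exact AddContent.inducedOuterMeasure_eq hΩ.isSetRing.isSetSemiring (hμ.toAddContent hΩ)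
    (hμ.isSigmaSubadditive hΩ) hA

theorem ENNReal.tendsto_of_le_add_of_le_add {a g : ℕ → ℝ≥0∞} {L : ℝ≥0∞}
    (hg : Tendsto g atTop (𝓝 0)) (h_upper : ∀ n, a n ≤ L + g n) (h_lower : ∀ n, L ≤ a n + g n) :
    Tendsto a atTop (𝓝 L) := by
  have h_sub : Tendsto (fun n => L - g n) atTop (𝓝 L) := by
    simpa using ENNReal.Tendsto.sub tendsto_const_nhds hg (Or.inr ENNReal.zero_ne_top)
  have h_add : Tendsto (fun n => L + g n) atTop (𝓝 L) := by
    simpa using tendsto_const_nhds.add hg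
  exact tendsto_of_tendsto_of_tendsto_of_le_of_le h_sub h_add
    (fun n => tsub_le_iff_right.2 (h_lower n)) h_upper

namespace MeasureTheory.OuterMeasure

theorem measure_symmDiff_le_add (m : OuterMeasure X) (A B S T : Set X) :
    m (A ∆ B) ≤ m (S ∆ T) + (m (A ∆ S) + m (B ∆ T)) := by
  calc m (A ∆ B) ≤ m (S ∆ T ∪ (A ∆ S ∪ B ∆ T)) := measure_mono fun x => by
        simp only [mem_symmDiff, mem_union]; tauto
    _ ≤ m (S ∆ T) + (m (A ∆ S) + m (B ∆ T)) :=
        (measure_union_le _ _).trans (by gcongr; exact measure_union_le _ _)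

theorem tendsto_measure_symmDiff (m : OuterMeasure X) {A B : ℕ → Set X} {S T : Set X}
    (hS : Tendsto (fun n => m (A n ∆ S)) atTop (𝓝 0))
    (hT : Tendsto (fun n => m (B n ∆ T)) atTop (𝓝 0)) :
    Tendsto (fun n => m (A n ∆ B n)) atTop (𝓝 (m (S ∆ T))) := by
  refine ENNReal.tendsto_of_le_add_of_le_add (by simpa using hS.add hT)
    (fun n => m.measure_symmDiff_le_add _ _ _ _) fun n => ?_
  have h := m.measure_symmDiff_le_add S T (A n) (B n)
  rwa [symmDiff_comm S (A n), symmDiff_comm T (B n)] at h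

end MeasureTheory.OuterMeasure

end

theorem stmt3_general {X : Type*} (Ω : Set (Set X)) (μ : Set X → ℝ≥0∞)
    (hΩ : IsSetAlgebraOn Ω) (hμ : IsCountablyAdditiveOn Ω μ)
    (A B : ℕ → Set X) (hA : MuCauchy Ω μ A) (hB : MuCauchy Ω μ B)
    (S T : Set X)
    (hS : Tendsto (fun n => muStar Ω μ (A n ∆ S)) atTop (𝓝 0))
    (hT : Tendsto (fun n => muStar Ω μ (B n ∆ T)) atTop (𝓝 0)) :
    Tendsto (fun n => μ (A n ∆ B n)) atTop (𝓝 (muStar Ω μ (S ∆ T))) := by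
  simp only [← muStar_eq_of_mem hΩ hμ (hΩ.symmDiff_mem (hA.1 _) (hB.1 _))]
  rw [muStar_eq_inducedOuterMeasure hΩ.1 hμ.1] at hS hT ⊢
  exact OuterMeasure.tendsto_measure_symmDiff _ hS hT

/-- isometry identity. -/
theorem stmt3 {X : Type*} (Ω : Set (Set X)) (μ : Set X → ℝ≥0∞)
    (hΩ : IsSetAlgebraOn Ω) (hμ : IsCountablyAdditiveOn Ω μ) (hfin : μ Set.univ ≠ ⊤)
    (A B : ℕ → Set X) (hA : MuCauchy Ω μ A) (hB : MuCauchy Ω μ B)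
    (S T : Set X)
    (hS : Tendsto (fun n => muStar Ω μ (A n ∆ S)) atTop (𝓝 0))
    (hT : Tendsto (fun n => muStar Ω μ (B n ∆ T)) atTop (𝓝 0)) :
    Tendsto (fun n => μ (A n ∆ B n)) atTop (𝓝 (muStar Ω μ (S ∆ T))) :=
  stmt3_general Ω μ hΩ hμ A B hA hB S T hS hT
end

section
/- (Intersection measure formula and disjoint additivity.) Let {A_n} and {B_n} be μ-Cauchy sequences in Ω, and let S, T ⊆ X satisfy lim_{n→∞} μ*(A_n △ S) = 0 and lim_{n→∞} μ*(B_n △ T) = 0. Then lim_{n→∞} μ(A_n ∩ B_n) exists and equals μ*(S ∩ T); consequently, if μ*(S ∩ T) = 0 then lim_{n→∞} μ(A_n ∪ B_n) = lim_{n→∞} μ(A_n) + lim_{n→∞} μ(B_n). -/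
open Filter Set Topology
open scoped symmDiff ENNReal

/-!
By σ-additivity, `μ*` is the outer measure induced by the additive content `μ` and agrees with
`μ` on `Ω` (Carathéodory). Monotonicity and subadditivity make any outer measure `ν` continuous
for the pseudometric `ν (· ∆ ·)`, and both `(A ∩ B) ∆ (S ∩ T)` and `(A ∪ B) ∆ (S ∪ T)` lie in
`(A ∆ S) ∪ (B ∆ T)`. Hence `μ (Aₙ ∩ Bₙ) → μ* (S ∩ T)` and `μ (Aₙ ∪ Bₙ) → μ* (S ∪ T)`, and passing
to the limit in inclusion–exclusion on `Ω` gives `μ* (S ∪ T) + μ* (S ∩ T) = μ* S + μ* T`.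
-/

open MeasureTheory

section

variable {X : Type*} {Ω : Set (Set X)} {μ : Set X → ℝ≥0∞}

theorem IsSetAlgebraOn.isSetAlgebra (hΩ : IsSetAlgebraOn Ω) : IsSetAlgebra Ω :=
  ⟨hΩ.1, fun s hs ↦ hΩ.2.1 s hs, fun s t hs ht ↦ hΩ.2.2 s hs t ht⟩

namespace IsCountablyAdditiveOn

theorem iUnion_eq_tsum (hμ : IsCountablyAdditiveOn Ω μ) (h0 : ∅ ∈ Ω) {ι : Type*} [Countable ι]
    {f : ι → Set X} (hf : ∀ i, f i ∈ Ω) (hd : Pairwise (Function.onFun Disjoint f))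
    (hU : ⋃ i, f i ∈ Ω) :
    μ (⋃ i, f i) = ∑' i, μ (f i) := by
  cases nonempty_encodable ι
  rw [← Encodable.iUnion_decode₂, ← tsum_iUnion_decode₂ μ hμ.1]
  exact hμ.2 _ (fun _ ↦ Encodable.iUnion_decode₂_cases h0 hf)
    (Encodable.iUnion_decode₂_disjoint_on hd) (by rwa [Encodable.iUnion_decode₂])

theorem union_eq (hμ : IsCountablyAdditiveOn Ω μ) (h0 : ∅ ∈ Ω) {s t : Set X} (hs : s ∈ Ω)
    (ht : t ∈ Ω) (hst : s ∪ t ∈ Ω) (hd : Disjoint s t) : μ (s ∪ t) = μ s + μ t := by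
  rw [union_eq_iUnion] at hst ⊢
  rw [hμ.iUnion_eq_tsum h0 (Bool.forall_bool.2 ⟨ht, hs⟩) (pairwise_disjoint_on_bool.2 hd) hst,
    tsum_fintype, Fintype.sum_bool, cond_true, cond_false]

noncomputable def addContent (hμ : IsCountablyAdditiveOn Ω μ) (hΩ : IsSetAlgebraOn Ω) :
    AddContent ℝ≥0∞ Ω :=
  hΩ.isSetAlgebra.isSetRing.addContent_of_union μ hμ.1 fun hs ht ↦
    hμ.union_eq hΩ.1 hs ht (hΩ.2.2 _ hs _ ht)

theorem isSigmaSubadditive_addContent (hμ : IsCountablyAdditiveOn Ω μ) (hΩ : IsSetAlgebraOn Ω) :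
    (hμ.addContent hΩ).IsSigmaSubadditive :=
  isSigmaSubadditive_of_addContent_iUnion_eq_tsum hΩ.isSetAlgebra.isSetRing
    fun _ hf hU hd ↦ hμ.iUnion_eq_tsum hΩ.1 hf hd hU

theorem union_add_inter (hμ : IsCountablyAdditiveOn Ω μ) (hΩ : IsSetAlgebraOn Ω) {s t : Set X}
    (hs : s ∈ Ω) (ht : t ∈ Ω) : μ (s ∪ t) + μ (s ∩ t) = μ s + μ t := by
  have hR := hΩ.isSetAlgebra.isSetRing
  have hts : t \ s ∈ Ω := hR.sdiff_mem ht hs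
  have hunion : μ (s ∪ t) = μ s + μ (t \ s) := by
    rw [← union_sdiff_self]
    exact addContent_union (m := hμ.addContent hΩ) hR hs hts disjoint_sdiff_right
  have ht_split : μ t = μ (s ∩ t) + μ (t \ s) := by
    conv_lhs => rw [← inter_union_sdiff t s, inter_comm]
    exact addContent_union (m := hμ.addContent hΩ) hR (hR.inter_mem hs ht) hts
      (disjoint_sdiff_right.mono_left inter_subset_left)
  rw [hunion, ht_split]; ring

noncomputable def outerMeasure (hμ : IsCountablyAdditiveOn Ω μ)
    (hΩ : IsSetAlgebraOn Ω) : OuterMeasure X :=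
  inducedOuterMeasure (fun s _ ↦ hμ.addContent hΩ s) hΩ.1 hμ.1

theorem outerMeasure_eq (hμ : IsCountablyAdditiveOn Ω μ) (hΩ : IsSetAlgebraOn Ω) {s : Set X}
    (hs : s ∈ Ω) : hμ.outerMeasure hΩ s = μ s :=
  (hμ.addContent hΩ).inducedOuterMeasure_eq hΩ.isSetAlgebra.isSetRing.isSetSemiring
    (hμ.isSigmaSubadditive_addContent hΩ) hs

end IsCountablyAdditiveOn

theorem muStar_eq_outerMeasure (hμ : IsCountablyAdditiveOn Ω μ) (hΩ : IsSetAlgebraOn Ω) :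
    muStar Ω μ = hμ.outerMeasure hΩ := by
  ext s
  unfold IsCountablyAdditiveOn.outerMeasure inducedOuterMeasure
  rw [OuterMeasure.ofFunction_eq_iInf_mem _ _ fun _ ↦ extend_eq_top _]
  refine iInf_congr fun C ↦ iInf_congr fun hC ↦ iInf_congr fun _ ↦ ?_
  exact tsum_congr fun i ↦ (extend_eq (fun s _ ↦ hμ.addContent hΩ s) (hC i)).symm

namespace MeasureTheory.OuterMeasure

variable {ι : Type*} {l : Filter ι} (ν : OuterMeasure X)

theorem tendsto_of_tendsto_symmDiff {s : ι → Set X} {t : Set X}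
    (h : Tendsto (fun i ↦ ν (s i ∆ t)) l (𝓝 0)) : Tendsto (fun i ↦ ν (s i)) l (𝓝 (ν t)) := by
  have hle : ∀ u v : Set X, ν u ≤ ν v + ν (u ∆ v) := fun u v ↦
    (measure_mono fun x hx ↦ by by_cases hv : x ∈ v <;> simp [mem_symmDiff, hx, hv]).trans
      (measure_union_le _ _)
  have hlower : Tendsto (fun i ↦ ν t - ν (s i ∆ t)) l (𝓝 (ν t)) := by
    simpa using ENNReal.Tendsto.sub tendsto_const_nhds h (Or.inr ENNReal.zero_ne_top)
  have hupper : Tendsto (fun i ↦ ν t + ν (s i ∆ t)) l (𝓝 (ν t)) := by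
    simpa using tendsto_const_nhds.add h
  refine tendsto_of_tendsto_of_tendsto_of_le_of_le hlower hupper (fun i ↦ ?_) fun i ↦ ?_
  · exact tsub_le_iff_right.2 (symmDiff_comm (s i) t ▸ hle t (s i))
  · exact hle _ _

theorem tendsto_symmDiff_of_subset_union {s s' u : ι → Set X} {t t' v : Set X}
    (hsub : ∀ i, u i ∆ v ⊆ s i ∆ t ∪ s' i ∆ t')
    (h : Tendsto (fun i ↦ ν (s i ∆ t)) l (𝓝 0)) (h' : Tendsto (fun i ↦ ν (s' i ∆ t')) l (𝓝 0)) :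
    Tendsto (fun i ↦ ν (u i ∆ v)) l (𝓝 0) := by
  refine tendsto_of_tendsto_of_tendsto_of_le_of_le tendsto_const_nhds (by simpa using h.add h')
    (fun _ ↦ zero_le) fun i ↦ (measure_mono (hsub i)).trans (measure_union_le _ _)

theorem tendsto_inter_of_tendsto_symmDiff {s s' : ι → Set X} {t t' : Set X}
    (h : Tendsto (fun i ↦ ν (s i ∆ t)) l (𝓝 0)) (h' : Tendsto (fun i ↦ ν (s' i ∆ t')) l (𝓝 0)) :
    Tendsto (fun i ↦ ν (s i ∩ s' i)) l (𝓝 (ν (t ∩ t'))) :=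
  ν.tendsto_of_tendsto_symmDiff <| ν.tendsto_symmDiff_of_subset_union
    (fun _ x ↦ by simp only [mem_symmDiff, mem_inter_iff, mem_union]; tauto) h h'

theorem tendsto_union_of_tendsto_symmDiff {s s' : ι → Set X} {t t' : Set X}
    (h : Tendsto (fun i ↦ ν (s i ∆ t)) l (𝓝 0)) (h' : Tendsto (fun i ↦ ν (s' i ∆ t')) l (𝓝 0)) :
    Tendsto (fun i ↦ ν (s i ∪ s' i)) l (𝓝 (ν (t ∪ t'))) :=
  ν.tendsto_of_tendsto_symmDiff <| ν.tendsto_symmDiff_of_subset_union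
    (fun _ x ↦ by simp only [mem_symmDiff, mem_union]; tauto) h h'

theorem union_add_inter_of_tendsto_symmDiff [l.NeBot] {s s' : ι → Set X} {t t' : Set X}
    (hs : ∀ i, ν (s i ∪ s' i) + ν (s i ∩ s' i) = ν (s i) + ν (s' i))
    (h : Tendsto (fun i ↦ ν (s i ∆ t)) l (𝓝 0)) (h' : Tendsto (fun i ↦ ν (s' i ∆ t')) l (𝓝 0)) :
    ν (t ∪ t') + ν (t ∩ t') = ν t + ν t' :=
  tendsto_nhds_unique
    ((ν.tendsto_union_of_tendsto_symmDiff h h').add (ν.tendsto_inter_of_tendsto_symmDiff h h'))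
    (((ν.tendsto_of_tendsto_symmDiff h).add (ν.tendsto_of_tendsto_symmDiff h')).congr
      fun i ↦ (hs i).symm)

end MeasureTheory.OuterMeasure

end

theorem stmt12_general {X : Type*} (Ω : Set (Set X)) (μ : Set X → ℝ≥0∞)
    (hΩ : IsSetAlgebraOn Ω) (hμ : IsCountablyAdditiveOn Ω μ)
    (A B : ℕ → Set X) (hA : MuCauchy Ω μ A) (hB : MuCauchy Ω μ B)
    (S T : Set X)
    (hS : Tendsto (fun n => muStar Ω μ (A n ∆ S)) atTop (𝓝 0))
    (hT : Tendsto (fun n => muStar Ω μ (B n ∆ T)) atTop (𝓝 0)) :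
    Tendsto (fun n => μ (A n ∩ B n)) atTop (𝓝 (muStar Ω μ (S ∩ T))) ∧
    (muStar Ω μ (S ∩ T) = 0 →
      ∃ a b : ℝ≥0∞, Tendsto (fun n => μ (A n)) atTop (𝓝 a) ∧
        Tendsto (fun n => μ (B n)) atTop (𝓝 b) ∧
        Tendsto (fun n => μ (A n ∪ B n)) atTop (𝓝 (a + b))) := by
  rw [muStar_eq_outerMeasure hμ hΩ] at hS hT ⊢
  set ν := hμ.outerMeasure hΩ
  have hν : ∀ s ∈ Ω, ν s = μ s := fun _ ↦ hμ.outerMeasure_eq hΩ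
  have hinter n : A n ∩ B n ∈ Ω := hΩ.isSetAlgebra.inter_mem (hA.1 n) (hB.1 n)
  have hunion n : A n ∪ B n ∈ Ω := hΩ.2.2 _ (hA.1 n) _ (hB.1 n)
  have hA_lim := (ν.tendsto_of_tendsto_symmDiff hS).congr fun n ↦ hν _ (hA.1 n)
  have hB_lim := (ν.tendsto_of_tendsto_symmDiff hT).congr fun n ↦ hν _ (hB.1 n)
  refine ⟨(ν.tendsto_inter_of_tendsto_symmDiff hS hT).congr fun n ↦ hν _ (hinter n),
    fun hST ↦ ⟨ν S, ν T, hA_lim, hB_lim, ?_⟩⟩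
  have hadd : ν (S ∪ T) + ν (S ∩ T) = ν S + ν T :=
    ν.union_add_inter_of_tendsto_symmDiff (fun n ↦ by
      rw [hν _ (hunion n), hν _ (hinter n), hν _ (hA.1 n), hν _ (hB.1 n)]
      exact hμ.union_add_inter hΩ (hA.1 n) (hB.1 n)) hS hT
  rw [hST, add_zero] at hadd
  exact hadd ▸ (ν.tendsto_union_of_tendsto_symmDiff hS hT).congr
    fun n ↦ hν _ (hunion n)

/-- intersection measure formula and disjoint additivity. -/
theorem stmt12 {X : Type*} (Ω : Set (Set X)) (μ : Set X → ℝ≥0∞)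
    (hΩ : IsSetAlgebraOn Ω) (hμ : IsCountablyAdditiveOn Ω μ) (hfin : μ Set.univ ≠ ⊤)
    (A B : ℕ → Set X) (hA : MuCauchy Ω μ A) (hB : MuCauchy Ω μ B)
    (S T : Set X)
    (hS : Tendsto (fun n => muStar Ω μ (A n ∆ S)) atTop (𝓝 0))
    (hT : Tendsto (fun n => muStar Ω μ (B n ∆ T)) atTop (𝓝 0)) :
    Tendsto (fun n => μ (A n ∩ B n)) atTop (𝓝 (muStar Ω μ (S ∩ T))) ∧
    (muStar Ω μ (S ∩ T) = 0 →
      ∃ a b : ℝ≥0∞, Tendsto (fun n => μ (A n)) atTop (𝓝 a) ∧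
        Tendsto (fun n => μ (B n)) atTop (𝓝 b) ∧
        Tendsto (fun n => μ (A n ∪ B n)) atTop (𝓝 (a + b))) :=
  stmt12_general Ω μ hΩ hμ A B hA hB S T hS hT
end
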